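/- Let V be a finite-dimensional normed real vector space of dimension n and let τ : V × V → ℝ be a non-degenerate bilinear form. There exist constants K ≥ 1 and C ≥ 1 depending on V and τ such that for every 0 < ρ ≤ 1/2: if (a_1, …, a_n) is a ρ-almost orthonormal basis of V, then for every x ∈ V, ‖x‖ ≤ K ρ^{-C} · max_{1 ≤ i ≤ n} |τ(a_i, x)|. -/

import Mathlib

open Pointwise

/-- `(a_1, …, a_n)` is a `ρ`-almost orthonormal family: every `a_k` has norm at most `ρ⁻¹`
and is at distance at least `ρ` from the span of the previous vectors. -/
def AlmostONB {V : Type*} [NormedAddCommGroup V] [NormedSpace ℝ V] (ρ : ℝ)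
    {n : ℕ} (a : Fin n → V) : Prop :=
  ∀ k : Fin n, ‖a k‖ ≤ ρ⁻¹ ∧
    ρ ≤ Metric.infDist (a k) (Submodule.span ℝ (a '' {j | j < k}) : Set V)

/-!
Expanding `v = ∑ cᵢ aᵢ` in a `ρ`-almost orthonormal basis, the last coefficient satisfies
`ρ |c_n| ≤ ‖v‖` because `a_n` is `ρ`-far from the span of the others; peeling off `c_n a_n`
costs a factor `1 + ρ⁻²` in norm, so all coefficients are at most `(1 + ρ⁻²)ⁿ ‖v‖`.
Non-degeneracy of `τ` makes `v ↦ τ v ·` an isomorphism onto the dual, so `‖x‖ = τ v x` for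
some `v` of norm `≤ M`; expanding this `v` in the basis bounds `‖x‖` by
`n (1 + ρ⁻²)ⁿ M maxᵢ |τ (aᵢ, x)|`.
-/

open Finset Metric Module

section

variable {V : Type*} [NormedAddCommGroup V] [NormedSpace ℝ V]

lemma abs_mul_infDist_le_norm_smul_add (W : Submodule ℝ V) (a : V) (c : ℝ) {w : V}
    (hw : w ∈ W) : |c| * infDist a W ≤ ‖c • a + w‖ := by
  rcases eq_or_ne c 0 with rfl | hc
  · simp
  have hmem : -c⁻¹ • w ∈ W := W.smul_mem _ hw
  calc |c| * infDist a W ≤ |c| * dist a (-c⁻¹ • w) := by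
        gcongr; exact infDist_le_dist_of_mem hmem
    _ = ‖c • a + w‖ := by
        rw [dist_eq_norm, ← Real.norm_eq_abs, ← norm_smul, smul_sub, smul_smul, mul_neg,
          mul_inv_cancel₀ hc, neg_one_smul, sub_neg_eq_add]

lemma one_add_inv_sq_pow_le {ρ : ℝ} (hρ : 0 < ρ) (hρ1 : ρ ≤ 1) (n : ℕ) :
    (1 + ρ⁻¹ ^ 2) ^ n ≤ 2 ^ n * ρ ^ (-(2 * n + 1 : ℝ)) := by
  have hρinv : 1 ≤ ρ⁻¹ := (one_le_inv₀ hρ).2 hρ1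
  have hrpow : ρ ^ (-(2 * n + 1 : ℝ)) = ρ⁻¹ ^ (2 * n + 1) := by
    rw [Real.rpow_neg hρ.le, show (2 * n + 1 : ℝ) = ((2 * n + 1 : ℕ) : ℝ) by push_cast; ring,
      Real.rpow_natCast, inv_pow]
  calc (1 + ρ⁻¹ ^ 2) ^ n ≤ (2 * ρ⁻¹ ^ 2) ^ n := by
        gcongr; nlinarith [one_le_pow₀ (n := 2) hρinv]
    _ = 2 ^ n * ρ⁻¹ ^ (2 * n) := by rw [mul_pow, ← pow_mul]
    _ ≤ 2 ^ n * ρ ^ (-(2 * n + 1 : ℝ)) := by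
        rw [hrpow]; gcongr 2 ^ n * ?_; exact pow_le_pow_right₀ hρinv (by omega)

namespace AlmostONB

variable {ρ : ℝ} {n : ℕ}

lemma comp_castSucc {a : Fin (n + 1) → V} (ha : AlmostONB ρ a) :
    AlmostONB ρ (a ∘ Fin.castSucc) := by
  intro k
  refine ⟨(ha k.castSucc).1, (ha k.castSucc).2.trans
    (infDist_le_infDist_of_subset ?_ ⟨0, Submodule.zero_mem _⟩)⟩
  refine Submodule.span_mono ?_
  rintro _ ⟨j, hj, rfl⟩
  exact ⟨j.castSucc, Fin.castSucc_lt_castSucc_iff.2 hj, rfl⟩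

lemma abs_coeff_last_le {a : Fin (n + 1) → V} (ha : AlmostONB ρ a) (c : Fin (n + 1) → ℝ) :
    ρ * |c (Fin.last n)| ≤ ‖∑ i, c i • a i‖ := by
  have hmem : ∑ i : Fin n, c i.castSucc • a i.castSucc ∈
      Submodule.span ℝ (a '' {j | j < Fin.last n}) :=
    Submodule.sum_mem _ fun i _ => Submodule.smul_mem _ _ <|
      Submodule.subset_span ⟨i.castSucc, Fin.castSucc_lt_last i, rfl⟩
  rw [Fin.sum_univ_castSucc, add_comm, mul_comm]
  exact (mul_le_mul_of_nonneg_left (ha _).2 (abs_nonneg _)).trans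
    (abs_mul_infDist_le_norm_smul_add _ _ _ hmem)

lemma abs_coeff_le (hρ : 0 < ρ) {a : Fin n → V} (ha : AlmostONB ρ a) (c : Fin n → ℝ)
    (k : Fin n) : |c k| ≤ (1 + ρ⁻¹ ^ 2) ^ n * ‖∑ i, c i • a i‖ := by
  induction n with
  | zero => exact k.elim0
  | succ n ih =>
    set D := 1 + ρ⁻¹ ^ 2
    set v := ∑ i, c i • a i
    set w := ∑ i : Fin n, c i.castSucc • a i.castSucc
    have hρD : ρ⁻¹ ≤ D := by nlinarith [sq_nonneg (ρ⁻¹ - 1)]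
    have hD : 1 ≤ D := le_add_of_nonneg_right (sq_nonneg _)
    have hlast : |c (Fin.last n)| ≤ ρ⁻¹ * ‖v‖ := by
      rw [le_inv_mul_iff₀ hρ]; exact ha.abs_coeff_last_le c
    have hrest : ‖w‖ ≤ D * ‖v‖ := by
      have hsplit : w = v - c (Fin.last n) • a (Fin.last n) := by
        simp only [v, w, Fin.sum_univ_castSucc, add_sub_cancel_right]
      calc _ ≤ ‖v‖ + |c (Fin.last n)| * ‖a (Fin.last n)‖ := by
            rw [hsplit, ← Real.norm_eq_abs, ← norm_smul]; exact norm_sub_le _ _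
        _ ≤ ‖v‖ + ρ⁻¹ * ‖v‖ * ρ⁻¹ := by
            gcongr; exact (ha _).1
        _ = D * ‖v‖ := by ring
    refine Fin.lastCases ?_ (fun i => ?_) k
    · calc |c (Fin.last n)| ≤ ρ⁻¹ * ‖v‖ := hlast
        _ ≤ D ^ (n + 1) * ‖v‖ := by
            gcongr; exact hρD.trans (le_self_pow₀ hD n.succ_ne_zero)
    · calc |c i.castSucc| ≤ D ^ n * ‖w‖ :=
            ih ha.comp_castSucc (c ∘ Fin.castSucc) i
        _ ≤ D ^ n * (D * ‖v‖) := by gcongr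
        _ = D ^ (n + 1) * ‖v‖ := by ring

lemma linearIndependent (hρ : 0 < ρ) {a : Fin n → V} (ha : AlmostONB ρ a) :
    LinearIndependent ℝ a :=
  Fintype.linearIndependent_iff.2 fun c hc i =>
    abs_nonpos_iff.1 (by simpa [hc] using ha.abs_coeff_le hρ c i)

lemma abs_apply_le [FiniteDimensional ℝ V] (hρ : 0 < ρ) {a : Fin (finrank ℝ V) → V}
    (ha : AlmostONB ρ a) (f : V →ₗ[ℝ] ℝ) (v : V) :
    |f v| ≤ finrank ℝ V * ((1 + ρ⁻¹ ^ 2) ^ finrank ℝ V * ‖v‖) * ⨆ i, |f (a i)| := by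
  have hspan := (ha.linearIndependent hρ).span_eq_top_of_card_eq_finrank' (Fintype.card_fin _)
  obtain ⟨c, rfl⟩ :=
    (Submodule.mem_span_range_iff_exists_fun ℝ).1 (hspan ▸ Submodule.mem_top : v ∈ _)
  have hle_sup : ∀ i, |f (a i)| ≤ ⨆ j, |f (a j)| :=
    le_ciSup (f := fun j => |f (a j)|) (Set.finite_range _).bddAbove
  calc |f (∑ i, c i • a i)| = |∑ i, c i * f (a i)| := by
        simp only [map_sum, map_smul, smul_eq_mul]
    _ ≤ ∑ i, |c i| * |f (a i)| := by
        simpa only [abs_mul] using abs_sum_le_sum_abs (fun i => c i * f (a i)) univ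
    _ ≤ ∑ _i, (1 + ρ⁻¹ ^ 2) ^ finrank ℝ V * ‖∑ i, c i • a i‖ * ⨆ j, |f (a j)| :=
        sum_le_sum fun i _ => mul_le_mul (ha.abs_coeff_le hρ c i) (hle_sup i) (abs_nonneg _)
          (by positivity)
    _ = _ := by rw [sum_const, card_univ, Fintype.card_fin, nsmul_eq_mul]; ring

end AlmostONB

lemma LinearMap.BilinForm.exists_norm_le_and_apply_eq_norm [FiniteDimensional ℝ V]
    {τ : LinearMap.BilinForm ℝ V} (hτ : τ.SeparatingLeft) :
    ∃ M, 0 ≤ M ∧ ∀ x : V, ∃ v, ‖v‖ ≤ M ∧ τ v x = ‖x‖ := by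
  let E := τ.toDual (.ofSeparatingLeft hτ)
  let S : StrongDual ℝ V →L[ℝ] V :=
    LinearMap.toContinuousLinearMap (E.symm.toLinearMap ∘ₗ ContinuousLinearMap.coeLM ℝ)
  refine ⟨‖S‖, S.opNorm_nonneg, fun x => ?_⟩
  obtain ⟨f, hf, hfx⟩ := exists_dual_vector'' ℝ x
  refine ⟨S f, (S.le_opNorm f).trans (mul_le_of_le_one_right (norm_nonneg _) hf), ?_⟩
  simpa [S, E] using hfx

end

/-- **Lemma 4.2**: if `τ` is a non-degenerate bilinear form on `V` and `(a_i)` is a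
`ρ`-almost orthonormal basis, then `‖x‖ ≤ K ρ^{-C} max_i |τ(a_i, x)|` for all `x ∈ V`. -/
theorem norm_bounded_by_bilinear_form_on_almost_orthonormal_basis
    {V : Type*} [NormedAddCommGroup V] [NormedSpace ℝ V] [FiniteDimensional ℝ V]
    (τ : V →ₗ[ℝ] V →ₗ[ℝ] ℝ) (hτ : ∀ x : V, (∀ y : V, τ x y = 0) → x = 0) :
    ∃ K : ℝ, 1 ≤ K ∧ ∃ C : ℝ, 1 ≤ C ∧
      ∀ ρ : ℝ, 0 < ρ → ρ ≤ 1 / 2 →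
        ∀ a : Fin (Module.finrank ℝ V) → V, AlmostONB ρ a →
          ∀ x : V, ‖x‖ ≤ K * ρ ^ (-C) * ⨆ i, |τ (a i) x| := by
  set n := finrank ℝ V
  obtain ⟨M, hM, hτM⟩ := LinearMap.BilinForm.exists_norm_le_and_apply_eq_norm hτ
  refine ⟨max 1 (n * 2 ^ n * M), le_max_left _ _, 2 * n + 1,
    by linarith [n.cast_nonneg (α := ℝ)], ?_⟩
  intro ρ hρ hρ2 a ha x
  obtain ⟨v, hv, hvx⟩ := hτM x
  have hsup : 0 ≤ ⨆ i, |τ (a i) x| := Real.iSup_nonneg fun _ => abs_nonneg _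
  have hpow := one_add_inv_sq_pow_le hρ (hρ2.trans (by norm_num)) n
  calc ‖x‖ ≤ |τ.flip x v| := hvx ▸ le_abs_self _
    _ ≤ n * ((1 + ρ⁻¹ ^ 2) ^ n * ‖v‖) * ⨆ i, |τ (a i) x| :=
        ha.abs_apply_le hρ (τ.flip x) v
    _ ≤ n * (2 ^ n * ρ ^ (-(2 * n + 1 : ℝ)) * M) * ⨆ i, |τ (a i) x| := by gcongr
    _ = n * 2 ^ n * M * ρ ^ (-(2 * n + 1 : ℝ)) * ⨆ i, |τ (a i) x| := by ring
    _ ≤ max 1 (n * 2 ^ n * M) * ρ ^ (-(2 * n + 1 : ℝ)) * ⨆ i, |τ (a i) x| := by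
        gcongr; exact le_max_right _ _
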